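/- arXiv:1503.01708 — 3 statements merged into one kernel-verified Lean document; each statement's English description precedes it below -/
import Mathlib

section
/- The cokernel of α is a cyclic group: coker(α) = M / range(α) is isomorphic, as an additive group, to ℤ/d_α ℤ, where d_α = gcd(N_1⋯N_n − 1, d). -/
/-!
In the cokernel the relations read `π e_i = N_i • π e_{i+1}`, so every `π e_i` is the multiple
`c_i • π e_1` of `π e_1` by the cyclic suffix product `c_i = N_i ⋯ N_n`. Going once around the
cycle gives `(N_1 ⋯ N_n - 1) • π e_1 = 0`, and `d • π e_1 = 0` holds anyway, so the cokernel
is cyclic of order dividing `d_α`. Conversely, `N_1 ⋯ N_n ≡ 1` modulo `d_α`, so that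
`c_i ≡ N_i c_{i+1}` holds cyclically modulo `d_α`; thus `v ↦ ∑ c_i v_i mod d_α` vanishes on
the range of `α` and sends `π e_1` to `1`, and the order is exactly `d_α`.
-/

open Finset

theorem nonempty_addEquiv_zmod_of_generator {G : Type*} [AddCommGroup G] {k : ℕ} {g : G}
    (hgen : ∀ x, x ∈ AddSubgroup.zmultiples g) (hk : (k : ℤ) • g = 0)
    (φ : G →+ ZMod k) (hφ : φ g = 1) : Nonempty (G ≃+ ZMod k) := by
  refine ⟨AddEquiv.ofBijective φ
    ⟨(injective_iff_map_eq_zero φ).2 fun x hx => ?_, fun z => ?_⟩⟩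
  · obtain ⟨m, rfl⟩ := AddSubgroup.mem_zmultiples_iff.1 (hgen x)
    rw [map_zsmul, hφ, zsmul_one, ZMod.intCast_zmod_eq_zero_iff_dvd] at hx
    obtain ⟨t, rfl⟩ := hx
    rw [mul_comm, mul_zsmul, hk, zsmul_zero]
  · obtain ⟨m, rfl⟩ := ZMod.intCast_surjective z
    exact ⟨m • g, by rw [map_zsmul, hφ, zsmul_one]⟩

theorem gcd_zsmul_eq_zero {G : Type*} [AddGroup G] {a b : ℤ} {g : G} (ha : a • g = 0)
    (hb : b • g = 0) : (Int.gcd a b : ℤ) • g = 0 :=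
  addOrderOf_dvd_iff_zsmul_eq_zero.1 <| Int.natCast_dvd_natCast.2 <|
    Int.dvd_gcd (addOrderOf_dvd_iff_zsmul_eq_zero.2 ha) (addOrderOf_dvd_iff_zsmul_eq_zero.2 hb)

def suffixProd {R : Type*} [CommMonoid R] {n : ℕ} (N : Fin n → R) (i : Fin n) : R :=
  ∏ j ∈ Ici i, N j

section suffixProd

variable {R : Type*} [CommMonoid R] {m : ℕ} (N : Fin (m + 1) → R)

theorem suffixProd_zero : suffixProd N 0 = ∏ i, N i := by
  rw [suffixProd, ← bot_eq_zero, Ici_bot]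

theorem suffixProd_last : suffixProd N (Fin.last m) = N (Fin.last m) := by
  rw [suffixProd, ← Fin.top_eq_last, Ici_top, prod_singleton]

theorem suffixProd_castSucc (i : Fin m) :
    suffixProd N i.castSucc = N i.castSucc * suffixProd N i.succ := by
  rw [suffixProd, Ici_eq_cons_Ioi, prod_cons, suffixProd]
  congr 2
  ext j
  simp [Fin.castSucc_lt_iff_succ_le]

theorem suffixProd_eq_mul_suffixProd_add_one (hN : ∏ i, N i = 1) (i : Fin (m + 1)) :
    suffixProd N i = N i * suffixProd N (i + 1) := by
  induction i using Fin.lastCases with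
  | last => rw [Fin.last_add_one, suffixProd_zero, hN, mul_one, suffixProd_last]
  | cast i => rw [Fin.coeSucc_eq_succ, suffixProd_castSucc]

theorem eq_suffixProd_smul_of_eq_smul_add_one {G : Type*} [MulAction R G] {f : Fin (m + 1) → G}
    (hf : ∀ i, f i = N i • f (i + 1)) (i : Fin (m + 1)) : f i = suffixProd N i • f 0 := by
  induction i using Fin.reverseInduction with
  | last => rw [hf, Fin.last_add_one, suffixProd_last]
  | cast i ih => rw [hf, Fin.coeSucc_eq_succ, ih, smul_smul, suffixProd_castSucc]

end suffixProd

def weightedSum {ι R S : Type*} [Fintype ι] [CommSemiring R] [CommSemiring S] (κ : R →+* S)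
    (w : ι → S) : (ι → R) →ₛₗ[κ] S where
  toFun v := ∑ i, w i * κ (v i)
  map_add' v v' := by simp [mul_add, sum_add_distrib]
  map_smul' a v := by simp [mul_sum, mul_left_comm]

theorem weightedSum_single {ι R S : Type*} [Fintype ι] [DecidableEq ι] [CommSemiring R]
    [CommSemiring S] (κ : R →+* S) (w : ι → S) (i : ι) :
    weightedSum κ w (Pi.single i 1) = w i := by
  simp [weightedSum, Pi.single_apply]

section cokernel

variable {m d : ℕ} {N : Fin (m + 1) → ℤ}
  {α : (Fin (m + 1) → ZMod d) →ₗ[ZMod d] (Fin (m + 1) → ZMod d)}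
  (hα : ∀ i : Fin (m + 1), α (Pi.single i 1) =
    (Pi.single i 1 : Fin (m + 1) → ZMod d) - (N i : ZMod d) • Pi.single (i + 1) 1)
include hα

theorem mkQ_single_eq_zsmul_mkQ_single_add_one (i : Fin (m + 1)) :
    (LinearMap.range α).mkQ (Pi.single i 1) =
      N i • (LinearMap.range α).mkQ (Pi.single (i + 1) 1) := by
  rw [← Int.cast_smul_eq_zsmul (ZMod d), ← map_smul, ← sub_eq_zero, ← map_sub, ← hα,
    Submodule.mkQ_apply, Submodule.Quotient.mk_eq_zero]
  exact LinearMap.mem_range_self α _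

theorem mkQ_single_eq_suffixProd_zsmul (i : Fin (m + 1)) :
    (LinearMap.range α).mkQ (Pi.single i 1) =
      suffixProd N i • (LinearMap.range α).mkQ (Pi.single 0 1) :=
  eq_suffixProd_smul_of_eq_smul_add_one N (mkQ_single_eq_zsmul_mkQ_single_add_one hα) i

theorem mem_zmultiples_mkQ_single_zero (q : (Fin (m + 1) → ZMod d) ⧸ LinearMap.range α) :
    q ∈ AddSubgroup.zmultiples ((LinearMap.range α).mkQ (Pi.single 0 1)) := by
  obtain ⟨x, rfl⟩ := (LinearMap.range α).mkQ_surjective q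
  rw [← univ_sum_single x, map_sum]
  refine AddSubgroup.sum_mem _ fun i _ => ?_
  obtain ⟨t, ht⟩ := ZMod.intCast_surjective (x i)
  rw [← ht, ← mul_one (t : ZMod d), ← smul_eq_mul, Pi.single_smul', map_smul,
    Int.cast_smul_eq_zsmul, mkQ_single_eq_suffixProd_zsmul hα i, smul_smul]
  exact AddSubgroup.zsmul_mem_zmultiples _ _

theorem gcd_zsmul_mkQ_single_zero_eq_zero :
    (Int.gcd ((∏ i, N i) - 1) d : ℤ) • (LinearMap.range α).mkQ (Pi.single 0 1) = 0 := by
  refine gcd_zsmul_eq_zero ?_ ?_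
  · rw [sub_smul, one_smul, ← suffixProd_zero, ← mkQ_single_eq_suffixProd_zsmul hα, sub_self]
  · rw [← Int.cast_smul_eq_zsmul (ZMod d), Int.cast_natCast, ZMod.natCast_self, zero_smul]

theorem exists_addMonoidHom_mkQ_single_zero_eq_one :
    ∃ φ : ((Fin (m + 1) → ZMod d) ⧸ LinearMap.range α) →+ ZMod (Int.gcd ((∏ i, N i) - 1) d),
      φ ((LinearMap.range α).mkQ (Pi.single 0 1)) = 1 := by
  set k := Int.gcd ((∏ i, N i) - 1) d
  have hprod : ∏ i, (N i : ZMod k) = 1 := by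
    rw [← Int.cast_prod, ← sub_eq_zero, ← Int.cast_one, ← Int.cast_sub,
      ZMod.intCast_zmod_eq_zero_iff_dvd]
    exact Int.gcd_dvd_left _ _
  have hkd : k ∣ d := Int.natCast_dvd_natCast.1 (Int.gcd_dvd_right _ _)
  let ψ := weightedSum (ZMod.castHom hkd (ZMod k)) (suffixProd fun i => (N i : ZMod k))
  have hψα : ψ.comp α = 0 := (Pi.basisFun (ZMod d) (Fin (m + 1))).ext fun i => by
    rw [Pi.basisFun_apply, LinearMap.comp_apply, hα, map_sub, map_smulₛₗ, weightedSum_single,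
      weightedSum_single, map_intCast, smul_eq_mul, LinearMap.zero_apply, sub_eq_zero]
    exact suffixProd_eq_mul_suffixProd_add_one _ hprod i
  refine ⟨((LinearMap.range α).liftQ ψ (LinearMap.range_le_ker_iff.2 hψα)).toAddMonoidHom, ?_⟩
  rw [LinearMap.toAddMonoidHom_coe, Submodule.mkQ_apply, Submodule.liftQ_apply,
    weightedSum_single, suffixProd_zero, hprod]

end cokernel

/-- Let `M = (ℤ/dℤ)^n` (with `n ≥ 1`) and let `α : M → M` be the `ℤ/dℤ`-linear map
determined on the standard basis by `α(e i) = e i - N i • e (i+1)` (indices mod `n`,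
so that `α(e_n) = e_n - N_n e_1`).  Then `coker α ≅ ℤ/d_α ℤ` where
`d_α = gcd (N_1 ⋯ N_n - 1) d`. -/
theorem coker_isomorphic_to_zmod_gcd
    (n d : ℕ) [NeZero n] (N : Fin n → ℤ)
    (α : (Fin n → ZMod d) →ₗ[ZMod d] (Fin n → ZMod d))
    (hα : ∀ i : Fin n,
      α (Pi.single i 1) =
        (Pi.single i 1 : Fin n → ZMod d) -
          (N i : ZMod d) • (Pi.single (i + 1) 1 : Fin n → ZMod d)) :
    Nonempty (((Fin n → ZMod d) ⧸ LinearMap.range α) ≃+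
      ZMod (Int.gcd ((∏ i, N i) - 1) (d : ℤ))) := by
  obtain ⟨m, rfl⟩ := Nat.exists_eq_succ_of_ne_zero (NeZero.ne n)
  obtain ⟨φ, hφ⟩ := exists_addMonoidHom_mkQ_single_zero_eq_one hα
  exact nonempty_addEquiv_zmod_of_generator (mem_zmultiples_mkQ_single_zero hα)
    (gcd_zsmul_mkQ_single_zero_eq_zero hα) φ hφ
end

section
/- The cokernel of α is generated by the image of the last basis vector: π(e_n) generates the group coker(α) = M / range(α). -/
/-- Let `M = (ℤ/dℤ)^n` (with `n ≥ 1`) and let `α : M → M` be the `ℤ/dℤ`-linear map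
determined on the standard basis by `α(e i) = e i - N i • e (i+1)` (indices mod `n`,
so that `α(e_n) = e_n - N_n e_1`).  Then the image `π(e_n)` of the last basis vector
generates the cokernel `M ⧸ range α`. -/
theorem coker_generated_by_image_of_last_basis_vector
    (n d : ℕ) [NeZero n] (N : Fin n → ℤ)
    (α : (Fin n → ZMod d) →ₗ[ZMod d] (Fin n → ZMod d))
    (hα : ∀ i : Fin n,
      α (Pi.single i 1) =
        (Pi.single i 1 : Fin n → ZMod d) -
          (N i : ZMod d) • (Pi.single (i + 1) 1 : Fin n → ZMod d)) :
    AddSubgroup.zmultiples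
      (Submodule.Quotient.mk (p := LinearMap.range α)
        (Pi.single (⟨n - 1, by have := NeZero.pos n; omega⟩ : Fin n) 1 : Fin n → ZMod d)) = ⊤ := by
  have hn := NeZero.pos n
  set lastI : Fin n := ⟨n - 1, by omega⟩ with hlast
  set π := (LinearMap.range α).mkQ with hπ
  have hmk : ∀ x : Fin n → ZMod d,
      (Submodule.Quotient.mk (p := LinearMap.range α) x) = π x := fun x => rfl
  have key : ∀ i : Fin n, π (Pi.single i 1) =
      (N i : ZMod d) • π (Pi.single (i + 1) 1) := by
    intro i
    have h0 : π (α (Pi.single i 1)) = 0 := by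
      simp [hπ, Submodule.Quotient.mk_eq_zero, LinearMap.mem_range_self]
    rw [hα i, map_sub, map_smul, sub_eq_zero] at h0
    exact h0
  set S := AddSubgroup.zmultiples (π (Pi.single lastI 1)) with hS
  have mem : ∀ i : Fin n, π (Pi.single i 1) ∈ S := by
    have main : ∀ m : ℕ, ∀ i : Fin n, (i : ℕ) = n - 1 - m → π (Pi.single i 1) ∈ S := by
      intro m
      induction m with
      | zero =>
        intro i hi
        have : i = lastI := Fin.ext (by simpa using hi)
        rw [this]
        exact AddSubgroup.mem_zmultiples _
      | succ m ih =>
        intro i hi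
        by_cases hm : m + 1 ≤ n - 1
        · have h1 : ((1 : Fin n) : ℕ) = 1 := by
            rw [Fin.val_one']
            exact Nat.mod_eq_of_lt (by omega)
          have hsucc : ((i + 1 : Fin n) : ℕ) = n - 1 - m := by
            rw [Fin.val_add, h1, Nat.mod_eq_of_lt (by omega)]
            omega
          have := ih (i + 1) hsucc
          rw [key i, Int.cast_smul_eq_zsmul]
          exact AddSubgroup.zsmul_mem _ this _
        · exact ih i (by omega)
    intro i
    exact main (n - 1 - i) i (by have := i.isLt; omega)
  rw [eq_top_iff]
  rintro x -
  obtain ⟨y, rfl⟩ := Submodule.Quotient.mk_surjective _ x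
  have hy : y = ∑ i, y i • (Pi.single i 1 : Fin n → ZMod d) := by
    ext j
    simp [Finset.sum_apply, Pi.single_apply, eq_comm]
  rw [hy]
  show π (∑ i, y i • (Pi.single i 1 : Fin n → ZMod d)) ∈
    AddSubgroup.zmultiples (π (Pi.single lastI 1))
  rw [map_sum]
  apply AddSubgroup.sum_mem
  intro i _
  rw [map_smul]
  have : (y i) • π (Pi.single i 1) = (ZMod.cast (y i) : ℤ) • π (Pi.single i 1) := by
    rw [← Int.cast_smul_eq_zsmul (ZMod d), ZMod.intCast_zmod_cast]
  rw [this]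
  exact AddSubgroup.zsmul_mem _ (mem i) _
end

section
/- Let Ω(K) be the quotient space (𝔸_{f,K} × 𝔸_{f,K})/∼, where (b, a) ∼ (d, c) if and only if a·R̂ = c·R̂ and b − d ∈ a·R̂, equipped with the quotient topology, and write [b, a] for the class of (b, a). Then the subset Ω(R) = { [b, a] ∈ Ω(K) : b ∈ R̂ and a ∈ R̂ } is clopen (both closed and open) in Ω(K). -/
open NumberField IsDedekindDomain

/-!
`R̂ × R̂` is a clopen subset of `𝔸_{f,K} × 𝔸_{f,K}`, since `R̂` is an open additive subgroup of
`𝔸_{f,K}`. It is saturated for `∼`: if `a ∈ R̂` and `a·R̂ = c·R̂`, then `c ∈ c·R̂ = a·R̂ ⊆ R̂`,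
and `b - d ∈ a·R̂ ⊆ R̂`, so `b ∈ R̂ ↔ d ∈ R̂`. A saturated clopen set has clopen image in the
quotient.
-/

section Saturated

variable {X : Type*} {r : X → X → Prop} {U : Set X}

theorem Quot.preimage_mk_image_mk_of_saturated (hsat : ∀ x y, r x y → (x ∈ U ↔ y ∈ U)) :
    Quot.mk r ⁻¹' (Quot.mk r '' U) = U := by
  ext y
  refine ⟨?_, fun hy => ⟨y, hy, rfl⟩⟩
  rintro ⟨x, hx, hxy⟩
  have hU : (x ∈ U) = (y ∈ U) :=
    congrArg (Quot.lift (· ∈ U) fun a b hab => propext (hsat a b hab)) hxy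
  exact hU ▸ hx

theorem isClopen_image_quot_mk_of_saturated [TopologicalSpace X] (hU : IsClopen U)
    (hsat : ∀ x y, r x y → (x ∈ U ↔ y ∈ U)) : IsClopen (Quot.mk r '' U) := by
  have hpre := Quot.preimage_mk_image_mk_of_saturated hsat
  constructor
  · rw [← isQuotientMap_quot_mk.isClosed_preimage, hpre]
    exact hU.isClosed
  · rw [← isQuotientMap_quot_mk.isOpen_preimage, hpre]
    exact hU.isOpen

end Saturated

namespace Subring

variable {A : Type*} [Ring A] (S : Subring A)

theorem image_mul_subset {a : A} (ha : a ∈ S) : (a * ·) '' S ⊆ S := by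
  rintro _ ⟨s, hs, rfl⟩
  exact S.mul_mem ha hs

theorem mem_of_image_mul_eq {a c : A} (ha : a ∈ S) (h : (a * ·) '' S = (c * ·) '' S) :
    c ∈ S :=
  S.image_mul_subset ha (h ▸ ⟨1, S.one_mem, mul_one c⟩)

theorem prod_mem_iff_of_image_mul_eq {x y : A × A} (h₂ : (x.2 * ·) '' S = (y.2 * ·) '' S)
    (h₁ : x.1 - y.1 ∈ (x.2 * ·) '' S) : x ∈ (S : Set A) ×ˢ S ↔ y ∈ (S : Set A) ×ˢ S := by
  constructor
  · rintro ⟨hx₁, hx₂⟩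
    have hd : x.1 - y.1 ∈ S := S.image_mul_subset hx₂ h₁
    exact ⟨by simpa using S.sub_mem hx₁ hd, S.mem_of_image_mul_eq hx₂ h₂⟩
  · rintro ⟨hy₁, hy₂⟩
    have hx₂ : x.2 ∈ S := S.mem_of_image_mul_eq hy₂ h₂.symm
    have hd : x.1 - y.1 ∈ S := S.image_mul_subset hx₂ h₁
    exact ⟨by simpa using S.add_mem hd hy₁, hx₂⟩

end Subring

namespace IsDedekindDomain.FiniteAdeleRing

variable (R : Type*) [CommRing R] [IsDedekindDomain R]
  (K : Type*) [Field K] [Algebra R K] [IsFractionRing R K]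

def integralAdeles : Subring (FiniteAdeleRing R K) where
  carrier := {x | ∀ v : HeightOneSpectrum R, x v ∈ v.adicCompletionIntegers K}
  mul_mem' hx hy v := mul_mem (hx v) (hy v)
  one_mem' _ := one_mem _
  add_mem' hx hy v := add_mem (hx v) (hy v)
  zero_mem' _ := zero_mem _
  neg_mem' hx v := neg_mem (hx v)

theorem isOpen_integralAdeles : IsOpen (integralAdeles R K : Set (FiniteAdeleRing R K)) :=
  RestrictedProduct.isOpen_forall_mem fun _ => Valued.isOpen_valuationSubring _

theorem isClopen_integralAdeles :
    IsClopen (integralAdeles R K : Set (FiniteAdeleRing R K)) :=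
  ⟨AddSubgroup.isClosed_of_isOpen (integralAdeles R K).toAddSubgroup (isOpen_integralAdeles R K),
    isOpen_integralAdeles R K⟩

end IsDedekindDomain.FiniteAdeleRing

/-- Let `Ω(K)` be the quotient of `𝔸_{f,K} × 𝔸_{f,K}` (with the product topology) by the
relation `(b, a) ∼ (d, c)` iff `a·R̂ = c·R̂` and `b - d ∈ a·R̂`, equipped with the
quotient topology.  Then the subset `Ω(R) = {[b, a] : b, a ∈ R̂}` is clopen in `Ω(K)`. -/
theorem omegaR_is_clopen
    (K : Type*) [Field K] [NumberField K]
    (Rhat : Set (FiniteAdeleRing (𝓞 K) K))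
    (hRhat : Rhat = {x : FiniteAdeleRing (𝓞 K) K |
      ∀ v : HeightOneSpectrum (𝓞 K), x v ∈ v.adicCompletionIntegers K})
    (r : FiniteAdeleRing (𝓞 K) K × FiniteAdeleRing (𝓞 K) K →
      FiniteAdeleRing (𝓞 K) K × FiniteAdeleRing (𝓞 K) K → Prop)
    (hr : ∀ x y, r x y ↔
      ((x.2 * ·) '' Rhat = (y.2 * ·) '' Rhat ∧ x.1 - y.1 ∈ (x.2 * ·) '' Rhat)) :
    IsClopen {ω : Quot r | ∃ b a : FiniteAdeleRing (𝓞 K) K,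
      b ∈ Rhat ∧ a ∈ Rhat ∧ ω = Quot.mk r (b, a)} := by
  obtain rfl : Rhat = FiniteAdeleRing.integralAdeles (𝓞 K) K := hRhat
  have hsat (x y) (hxy : r x y) := Subring.prod_mem_iff_of_image_mul_eq
    (FiniteAdeleRing.integralAdeles (𝓞 K) K) ((hr x y).1 hxy).1 ((hr x y).1 hxy).2
  have hS := FiniteAdeleRing.isClopen_integralAdeles (𝓞 K) K
  convert isClopen_image_quot_mk_of_saturated (hS.prod hS) hsat using 1
  ext ω
  simp [and_assoc, eq_comm]
end
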